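/- Let C be a nonempty q-ary code of length n with bounded symbol weight r and minimum Hamming distance d ≤ n. Then the narrowband noise error-correcting capability c(C) = min{e : E(e; C) ≥ d} satisfies ⌈d/r⌉ ≤ c(C) ≤ min{d, q}. -/
import Mathlib

/-- Number of occurrences of the symbol `σ` in the word `u`. -/
def symbolCount {n : ℕ} {A : Type*} [Fintype A] [DecidableEq A]
    (u : Fin n → A) (σ : A) : ℕ :=
  (Finset.univ.filter fun i => u i = σ).card

lemma sum_symbolCount {n : ℕ} {A : Type*} [Fintype A] [DecidableEq A] (c : Fin n → A) :
    ∑ σ, symbolCount c σ = n := by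
  simp only [symbolCount]
  have h := Finset.card_eq_sum_card_fiberwise
    (s := (Finset.univ : Finset (Fin n))) (t := Finset.univ) (f := c)
    (fun i _ => Finset.mem_univ (c i))
  simpa using h.symm

/-- `E(e; C)`. -/
def EC {n : ℕ} {A : Type*} [Fintype A] [DecidableEq A]
    (C : Finset (Fin n → A)) (e : ℕ) : ℕ :=
  C.sup fun c => (Finset.univ.powersetCard e).sup fun Γ => ∑ σ ∈ Γ, symbolCount c σ

/-- The narrowband noise error-correcting capability `c(C)` of a code of
minimum distance `d`. -/
noncomputable def nbCap {n : ℕ} {A : Type*} [Fintype A] [DecidableEq A]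
    (C : Finset (Fin n → A)) (d : ℕ) : ℕ :=
  sInf {e : ℕ | d ≤ EC C e}

/-- for a nonempty code of length `n` with bounded symbol weight `r`
and minimum Hamming distance `d ≤ n`, `⌈d/r⌉ ≤ c(C) ≤ min (d, q)`. -/
theorem stmt7 {n q : ℕ} {A : Type*} [Fintype A] [DecidableEq A]
    (hq : Fintype.card A = q) (hq1 : 1 ≤ q)
    (C : Finset (Fin n → A)) (hC : C.Nonempty)
    (r d : ℕ) (hr1 : 1 ≤ r) (hd1 : 1 ≤ d) (hdn : d ≤ n)
    (hbsw : (C.sup fun c => Finset.univ.sup (symbolCount c)) = r)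
    (hmin : ∀ u ∈ C, ∀ v ∈ C, u ≠ v → d ≤ hammingDist u v)
    (hach : ∃ u ∈ C, ∃ v ∈ C, u ≠ v ∧ hammingDist u v = d) :
    (d + r - 1) / r ≤ nbCap C d ∧ nbCap C d ≤ min d q := by
  obtain ⟨c0, hc0⟩ := hC
  have hcount : ∀ c ∈ C, ∀ σ, symbolCount c σ ≤ r := by
    intro c hc σ
    calc symbolCount c σ ≤ Finset.univ.sup (symbolCount c) := Finset.le_sup (Finset.mem_univ σ)
      _ ≤ r := hbsw ▸ Finset.le_sup (f := fun c => Finset.univ.sup (symbolCount c)) hc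
  have hECle : ∀ e, EC C e ≤ e * r := by
    intro e
    apply Finset.sup_le; intro c hc
    apply Finset.sup_le; intro Γ hΓ
    rw [Finset.mem_powersetCard] at hΓ
    calc ∑ σ ∈ Γ, symbolCount c σ ≤ ∑ σ ∈ Γ, r :=
          Finset.sum_le_sum (fun σ _ => hcount c hc σ)
      _ = e * r := by rw [Finset.sum_const, hΓ.2, smul_eq_mul]
  have hmem : d ≤ EC C (min d q) := by
    by_cases h : q ≤ d
    · rw [min_eq_right h]
      have hu : (Finset.univ : Finset A) ∈ (Finset.univ : Finset A).powersetCard q := by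
        rw [Finset.mem_powersetCard]
        exact ⟨le_refl _, by rw [Finset.card_univ, hq]⟩
      calc d ≤ n := hdn
        _ = ∑ σ, symbolCount c0 σ := (sum_symbolCount c0).symm
        _ ≤ (Finset.univ.powersetCard q).sup fun Γ => ∑ σ ∈ Γ, symbolCount c0 σ :=
            Finset.le_sup (f := fun Γ => ∑ σ ∈ Γ, symbolCount c0 σ) hu
        _ ≤ EC C q := Finset.le_sup (f := fun c => (Finset.univ.powersetCard q).sup fun Γ => ∑ σ ∈ Γ, symbolCount c σ) hc0
    · push_neg at h
      rw [min_eq_left h.le]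
      set S := Finset.univ.filter (fun σ => 1 ≤ symbolCount c0 σ) with hS
      by_cases hcard : d ≤ S.card
      · obtain ⟨Γ, hΓS, hΓcard⟩ := Finset.exists_subset_card_eq hcard
        have hΓmem : Γ ∈ (Finset.univ : Finset A).powersetCard d := by
          rw [Finset.mem_powersetCard]; exact ⟨Finset.subset_univ _, hΓcard⟩
        have hsum : d ≤ ∑ σ ∈ Γ, symbolCount c0 σ := by
          calc d = ∑ _σ ∈ Γ, 1 := by rw [Finset.sum_const, hΓcard, smul_eq_mul, mul_one]
            _ ≤ ∑ σ ∈ Γ, symbolCount c0 σ := Finset.sum_le_sum (fun σ hσ => by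
                have := hΓS hσ; rw [hS, Finset.mem_filter] at this; exact this.2)
        calc d ≤ ∑ σ ∈ Γ, symbolCount c0 σ := hsum
          _ ≤ (Finset.univ.powersetCard d).sup fun Γ => ∑ σ ∈ Γ, symbolCount c0 σ :=
              Finset.le_sup (f := fun Γ => ∑ σ ∈ Γ, symbolCount c0 σ) hΓmem
          _ ≤ EC C d := Finset.le_sup (f := fun c => (Finset.univ.powersetCard d).sup fun Γ => ∑ σ ∈ Γ, symbolCount c σ) hc0
      · push_neg at hcard
        have hdq : d ≤ Fintype.card A := by rw [hq]; exact h.le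
        obtain ⟨Γ, hSΓ, hΓcard⟩ :=
          Finset.exists_superset_card_eq hcard.le hdq
        have hΓmem : Γ ∈ (Finset.univ : Finset A).powersetCard d := by
          rw [Finset.mem_powersetCard]; exact ⟨Finset.subset_univ _, hΓcard⟩
        have h1 : ∑ σ ∈ Γ, symbolCount c0 σ = ∑ σ, symbolCount c0 σ := by
          apply Finset.sum_subset (Finset.subset_univ Γ)
          intro σ _ hσΓ
          by_contra hne
          exact hσΓ (hSΓ (by rw [hS, Finset.mem_filter]; exact ⟨Finset.mem_univ _, by omega⟩))
        have hsum : ∑ σ ∈ Γ, symbolCount c0 σ = n := h1.trans (sum_symbolCount c0)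
        calc d ≤ n := hdn
          _ = ∑ σ ∈ Γ, symbolCount c0 σ := hsum.symm
          _ ≤ (Finset.univ.powersetCard d).sup fun Γ => ∑ σ ∈ Γ, symbolCount c0 σ :=
              Finset.le_sup (f := fun Γ => ∑ σ ∈ Γ, symbolCount c0 σ) hΓmem
          _ ≤ EC C d := Finset.le_sup (f := fun c => (Finset.univ.powersetCard d).sup fun Γ => ∑ σ ∈ Γ, symbolCount c σ) hc0
  have hmemset : min d q ∈ {e : ℕ | d ≤ EC C e} := hmem
  unfold nbCap
  constructor
  · apply le_csInf ⟨min d q, hmemset⟩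
    intro e he
    have hle : d ≤ e * r := le_trans he (hECle e)
    have hr0 : 0 < r := hr1
    have hlt : (d + r - 1) / r < e + 1 := by
      rw [Nat.div_lt_iff_lt_mul hr0]
      have hmul : (e + 1) * r = e * r + r := by ring
      omega
    omega
  · exact Nat.sInf_le hmemset
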